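/- Let k be a field of characteristic p > 0 and F ∈ k[X]^n. Let W be the p^n × p^n matrix indexed by multiindices α,β ∈ [0,p−1]^n with entries W_{αβ} = ∂^α F^β. Then det W = c_p^n · Δ(F), where c_p = ∏_{k=1}^{p−1} k!. -/

import Mathlib

/-!
In characteristic `p` every `∂ᵢ` kills `X_j^p`, hence all of `k[X^p]`, so `∂^α` is
`k[X^p]`-linear. Applying it to `F^β = Σ_γ U_{βγ} X^γ` gives `W = V Uᵀ` with
`V_{αγ} = ∂^α X^γ`. The entry `V_{αγ}` vanishes unless `α ≤ γ` componentwise, so `V` is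
triangular for the lexicographic order, with diagonal `∂^α X^α = ∏ᵢ αᵢ!`. Each `b!` with
`b < p` occurs `n p^{n-1}` times in `∏_α ∏ᵢ αᵢ!`, and Frobenius fixes the prime field,
which leaves `c_p^n`.
-/

open MvPolynomial

/-- The lexicographic order extends the componentwise one, so such a matrix is triangular. -/
theorem Matrix.det_eq_prod_diag_of_apply_eq_zero_of_not_le {ι κ R : Type*} [Fintype ι]
    [LinearOrder ι] [Fintype κ] [LinearOrder κ] [CommRing R]
    (M : Matrix (ι → κ) (ι → κ) R) (hM : ∀ a b, ¬a ≤ b → M a b = 0) :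
    M.det = ∏ a, M a a := by
  rw [← M.det_submatrix_equiv_self toLex.symm]
  exact det_of_isUpperTriangular fun a b hba =>
    hM _ _ fun hle => (Pi.toLex_monotone hle).not_gt hba

theorem Fintype.prod_pi_apply_eq_pow {ι κ M : Type*} [Fintype ι] [DecidableEq ι] [Fintype κ]
    [CommMonoid M] (f : κ → M) (i : ι) :
    ∏ a : ι → κ, f (a i) = (∏ b, f b) ^ Fintype.card κ ^ (Fintype.card ι - 1) := by
  rw [Fintype.prod_equiv (Equiv.funSplitAt i κ) (fun a => f (a i)) (fun x => f x.1)
    fun _ => rfl, Fintype.prod_prod_type, ← Finset.prod_pow]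
  simp

theorem Fin.prod_univ_eq_prod_Icc_of_map_zero {M : Type*} [CommMonoid M] {g : ℕ → M}
    (hg : g 0 = 1) (p : ℕ) : ∏ b : Fin p, g b = ∏ j ∈ Finset.Icc 1 (p - 1), g j := by
  cases p with
  | zero => simp
  | succ m =>
    rw [Fin.prod_univ_eq_prod_range, Finset.prod_range_succ', hg, mul_one, Nat.add_sub_cancel,
      ← Finset.Ico_add_one_right_eq_Icc, Finset.prod_Ico_eq_prod_range, Nat.add_sub_cancel]
    simp_rw [add_comm 1]

theorem prod_pi_prod_factorial_eq_pow {k : Type*} [CommRing k] (p : ℕ) [Fact p.Prime]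
    [CharP k p] (ι : Type*) [Fintype ι] [DecidableEq ι] :
    ∏ a : ι → Fin p, ∏ i, ((a i : ℕ).factorial : k) =
      (∏ j ∈ Finset.Icc 1 (p - 1), (j.factorial : k)) ^ Fintype.card ι := by
  have hfrob (N t : ℕ) : (N : k) ^ p ^ t = N := map_natCast (iterateFrobenius k p t) N
  rw [Finset.prod_comm]
  simp_rw [Fintype.prod_pi_apply_eq_pow (fun b : Fin p => ((b : ℕ).factorial : k)),
    Fintype.card_fin, ← Nat.cast_prod, hfrob, Finset.prod_const, Finset.card_univ, Nat.cast_prod]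
  exact congrArg (· ^ _)
    (Fin.prod_univ_eq_prod_Icc_of_map_zero (g := fun j => (j.factorial : k)) (by simp) p)

namespace MvPolynomial

variable {R σ : Type*} [CommRing R]

theorem pderiv_eq_zero_of_mem_adjoin_X_pow (p : ℕ) [CharP R p] (i : σ) {u : MvPolynomial σ R}
    (hu : u ∈ Algebra.adjoin R (Set.range fun j : σ => (X j : MvPolynomial σ R) ^ p)) :
    pderiv i u = 0 := by
  induction hu using Algebra.adjoin_induction with
  | mem x hx =>
    obtain ⟨j, rfl⟩ := hx
    rw [Derivation.leibniz_pow, ← Nat.cast_smul_eq_nsmul R, CharP.cast_eq_zero, zero_smul]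
  | algebraMap r => simp [algebraMap_eq]
  | add x y _ _ hx hy => rw [map_add, hx, hy, add_zero]
  | mul x y _ _ hx hy => rw [Derivation.leibniz, hx, hy, smul_zero, smul_zero, add_zero]

theorem iterate_pderiv_monomial (i : σ) (a : ℕ) (s : σ →₀ ℕ) (c : R) :
    (pderiv i)^[a] (monomial s c) =
      monomial (s - Finsupp.single i a) (c * (s i).descFactorial a) := by
  induction a with
  | zero => simp
  | succ a ih =>
    rw [Function.iterate_succ_apply', ih, pderiv_monomial, tsub_tsub, ← Finsupp.single_add,
      Finsupp.tsub_apply, Finsupp.single_eq_same, Nat.descFactorial_succ, mul_assoc]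
    push_cast
    ring_nf

theorem list_prod_pow_pderiv_monomial [DecidableEq σ] (a : σ → ℕ) {l : List σ} (hl : l.Nodup)
    (s : σ →₀ ℕ) (c : R) :
    (l.map fun i => (pderiv i).toLinearMap ^ a i).prod (monomial s c) =
      monomial (s - ∑ i ∈ l.toFinset, Finsupp.single i (a i))
        (c * ∏ i ∈ l.toFinset, (s i).descFactorial (a i)) := by
  induction l with
  | nil => simp
  | cons j l ih =>
    obtain ⟨hj, hl⟩ := List.nodup_cons.mp hl
    have hj' : j ∉ l.toFinset := by simpa using hj
    have hsj : (s - ∑ i ∈ l.toFinset, Finsupp.single i (a i)) j = s j := by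
      simp [Finsupp.single_apply, List.mem_toFinset, hj]
    rw [List.map_cons, List.prod_cons, Module.End.mul_apply, ih hl, Module.End.coe_pow,
      Derivation.coeFn_coe, iterate_pderiv_monomial, hsj, tsub_tsub, List.toFinset_cons,
      Finset.sum_insert hj', Finset.prod_insert hj', add_comm (Finsupp.single j (a j))]
    push_cast
    ring_nf

variable {n : ℕ}

noncomputable def pderivPow (α : Fin n → ℕ) : Module.End R (MvPolynomial (Fin n) R) :=
  (List.ofFn fun i => (pderiv i).toLinearMap ^ α i).prod

theorem coe_pderivPow (α : Fin n → ℕ) :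
    ⇑(pderivPow (R := R) α) =
      (List.ofFn fun i => (⇑(pderiv i))^[α i]).foldr (· ∘ ·) id := by
  rw [pderivPow, List.ofFn_eq_map, List.ofFn_eq_map]
  induction List.finRange n with
  | nil => rfl
  | cons j l ih =>
    rw [List.map_cons, List.prod_cons, Module.End.coe_mul, ih, List.map_cons, List.foldr_cons,
      Module.End.coe_pow, Derivation.coeFn_coe]

theorem pderivPow_monomial (α : Fin n → ℕ) (s : Fin n →₀ ℕ) (c : R) :
    pderivPow α (monomial s c) =
      monomial (s - Finsupp.equivFunOnFinite.symm α) (c * ∏ i, (s i).descFactorial (α i)) := by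
  rw [pderivPow, List.ofFn_eq_map,
    list_prod_pow_pderiv_monomial _ (List.nodup_finRange n), List.toFinset_finRange,
    Finsupp.equivFunOnFinite_symm_eq_sum]

theorem prod_univ_X_pow_eq_monomial (γ : Fin n → ℕ) :
    ∏ i, (X i : MvPolynomial (Fin n) R) ^ γ i =
      monomial (Finsupp.equivFunOnFinite.symm γ) 1 := by
  simp [monomial_eq, Finsupp.prod_fintype]

theorem pderivPow_prod_X_pow_of_not_le {α γ : Fin n → ℕ} (h : ¬α ≤ γ) :
    pderivPow α (∏ i, (X i : MvPolynomial (Fin n) R) ^ γ i) = 0 := by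
  obtain ⟨i, hi⟩ : ∃ i, γ i < α i := by simpa [Pi.le_def] using h
  rw [prod_univ_X_pow_eq_monomial, pderivPow_monomial, Finset.prod_eq_zero (Finset.mem_univ i)]
  · simp
  · simpa using Nat.descFactorial_eq_zero_iff_lt.mpr hi

theorem pderivPow_prod_X_pow_self (α : Fin n → ℕ) :
    pderivPow α (∏ i, (X i : MvPolynomial (Fin n) R) ^ α i) =
      C (∏ i, ((α i).factorial : R)) := by
  rw [prod_univ_X_pow_eq_monomial, pderivPow_monomial, tsub_self, one_mul, monomial_zero']
  simp [Nat.descFactorial_self]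

theorem pderivPow_mul_of_pderiv_eq_zero (α : Fin n → ℕ) {u : MvPolynomial (Fin n) R}
    (hu : ∀ i, pderiv i u = 0) (v : MvPolynomial (Fin n) R) :
    pderivPow α (u * v) = u * pderivPow α v := by
  have hcomm : Commute (pderivPow α) (LinearMap.mulLeft R u) := by
    refine Commute.list_prod_left _ _ fun D hD => ?_
    obtain ⟨i, rfl⟩ := List.mem_ofFn.mp hD
    refine Commute.pow_left (LinearMap.ext fun w => ?_) _
    simp [hu i]
  exact LinearMap.congr_fun hcomm v

theorem det_pderivPow_prod_X_pow (p n : ℕ) :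
    (Matrix.of fun α γ : Fin n → Fin p => pderivPow (fun i => (α i : ℕ))
        (∏ i, (X i : MvPolynomial (Fin n) R) ^ (γ i : ℕ))).det =
      C (∏ α : Fin n → Fin p, ∏ i, ((α i : ℕ).factorial : R)) := by
  refine (Matrix.det_eq_prod_diag_of_apply_eq_zero_of_not_le _ fun α γ h => ?_).trans ?_
  · exact pderivPow_prod_X_pow_of_not_le fun hle =>
      h fun i => Fin.le_iff_val_le_val.mpr (hle i)
  · rw [map_prod]
    exact Finset.prod_congr rfl fun α _ => pderivPow_prod_X_pow_self _

end MvPolynomial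

theorem stmt8 {k : Type*} [Field k] (p : ℕ) (hp : p.Prime) [CharP k p] (n : ℕ)
    (F : Fin n → MvPolynomial (Fin n) k)
    (UF : Matrix (Fin n → Fin p) (Fin n → Fin p) (MvPolynomial (Fin n) k))
    (hUFmem : ∀ α β, UF α β ∈
      Algebra.adjoin k (Set.range fun i : Fin n => (X i : MvPolynomial (Fin n) k) ^ p))
    (hUF : ∀ α : Fin n → Fin p,
      ∏ i : Fin n, F i ^ (α i : ℕ) = ∑ β : Fin n → Fin p, UF α β * ∏ i : Fin n, X i ^ (β i : ℕ)) :
    (Matrix.of fun α β : Fin n → Fin p =>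
        (List.ofFn fun i : Fin n => (⇑(pderiv i))^[(α i : ℕ)]).foldr (· ∘ ·) id
          (∏ i : Fin n, F i ^ (β i : ℕ))).det =
      C ((∏ j ∈ Finset.Icc 1 (p - 1), (j.factorial : k)) ^ n) * UF.det := by
  have := Fact.mk hp
  set V := Matrix.of fun α γ : Fin n → Fin p =>
    pderivPow (fun i => (α i : ℕ)) (∏ i, (X i : MvPolynomial (Fin n) k) ^ (γ i : ℕ))
  have hW : (Matrix.of fun α β : Fin n → Fin p =>
      (List.ofFn fun i : Fin n => (⇑(pderiv i))^[(α i : ℕ)]).foldr (· ∘ ·) id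
        (∏ i : Fin n, F i ^ (β i : ℕ))) = V * UF.transpose := by
    refine Matrix.ext fun α β => ?_
    rw [Matrix.of_apply, ← coe_pderivPow (R := k), hUF β, map_sum (pderivPow _),
      Matrix.mul_apply]
    refine Finset.sum_congr rfl fun γ _ => ?_
    rw [pderivPow_mul_of_pderiv_eq_zero _
      fun i => pderiv_eq_zero_of_mem_adjoin_X_pow p i (hUFmem β γ), mul_comm]
    rfl
  rw [hW, Matrix.det_mul, Matrix.det_transpose, det_pderivPow_prod_X_pow,
    prod_pi_prod_factorial_eq_pow, Fintype.card_fin]
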